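/- Let Θ be a set and, for some ε > 0, suppose sup_{θ∈Θ} ∫ |log f_θ(z)|^{1+ε} p(z) dz ≤ B_p < ∞ and sup_{θ∈Θ} ∫ |log f_θ(z)|^{1+ε} q(z) dz ≤ B_q < ∞ for probability densities p and q. Then sup_{θ∈Θ} |∫ log f_θ(z) q(z) dz − ∫ log f_θ(z) p(z) dz| ≤ (B_p + B_q)^{1/(1+ε)} · (∫ |q(z) − p(z)| dz)^{ε/(1+ε)}. -/

import Mathlib

/-!
Write `g = log f_θ`. The difference of the two expectations is `∫ g (q - p)`, bounded by
`∫ |g| |q - p|`. Hölder's inequality for the finite measure `|q - p| dz` with exponents `1 + ε`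
and `(1 + ε)/ε` bounds this by `(∫ |g|^{1+ε} |q - p|)^{1/(1+ε)} (∫ |q - p|)^{ε/(1+ε)}`, and
`|q - p| ≤ p + q` bounds the first factor by `(B_p + B_q)^{1/(1+ε)}`. The `(1+ε)`-moments also
make `g p` and `g q` integrable, since `|g| ≤ |g|^{1+ε} + 1`.
-/

open MeasureTheory

namespace MeasureTheory

variable {α : Type*} [MeasurableSpace α] {μ : Measure α}

theorem Integrable.mul_of_integrable_rpow_abs_mul {r : ℝ} (hr : 1 ≤ r) {g w : α → ℝ}
    (hg : AEStronglyMeasurable g μ) (hw0 : ∀ x, 0 ≤ w x) (hw : Integrable w μ)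
    (hgw : Integrable (fun x => |g x| ^ r * w x) μ) :
    Integrable (fun x => g x * w x) μ := by
  refine (hgw.add hw).mono' (hg.mul hw.1) (Filter.Eventually.of_forall fun x => ?_)
  have hg_le : |g x| ≤ |g x| ^ r + 1 := by
    rcases le_total |g x| 1 with h | h
    · linarith [Real.rpow_nonneg (abs_nonneg (g x)) r]
    · linarith [Real.self_le_rpow_of_one_le h hr]
  rw [Pi.add_apply, Real.norm_eq_abs, abs_mul, abs_of_nonneg (hw0 x)]
  nlinarith [hw0 x]

theorem memLp_ofReal_of_integrable_rpow {t : ℝ} (ht : 0 < t) {H : α → ℝ} (hH0 : ∀ x, 0 ≤ H x)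
    (hH : AEStronglyMeasurable H μ) (hHt : Integrable (fun x => H x ^ t) μ) :
    MemLp H (ENNReal.ofReal t) μ := by
  refine (integrable_norm_rpow_iff hH (by simpa using ht) ENNReal.ofReal_ne_top).1 ?_
  simpa only [ENNReal.toReal_ofReal ht.le, Real.norm_eq_abs, abs_of_nonneg (hH0 _)] using hHt

theorem integral_abs_mul_le_of_holderConjugate {r s : ℝ} (hrs : r.HolderConjugate s)
    {g w : α → ℝ} (hg : AEStronglyMeasurable g μ) (hw0 : ∀ x, 0 ≤ w x) (hw : Integrable w μ)
    (hgw : Integrable (fun x => |g x| ^ r * w x) μ) :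
    ∫ x, |g x| * w x ∂μ ≤ (∫ x, |g x| ^ r * w x ∂μ) ^ (1 / r) * (∫ x, w x ∂μ) ^ (1 / s) := by
  set F : α → ℝ := fun x => |g x| * w x ^ (1 / r)
  set G : α → ℝ := fun x => w x ^ (1 / s)
  have hF0 : ∀ x, 0 ≤ F x := fun x => mul_nonneg (abs_nonneg _) (Real.rpow_nonneg (hw0 x) _)
  have hG0 : ∀ x, 0 ≤ G x := fun x => Real.rpow_nonneg (hw0 x) _
  have hFG : ∀ x, F x * G x = |g x| * w x := fun x => by
    rw [mul_assoc, ← Real.rpow_add_of_nonneg (hw0 x) hrs.one_div_nonneg hrs.symm.one_div_nonneg,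
      hrs.one_div_add_one_div, div_one, Real.rpow_one]
  have hFr : ∀ x, F x ^ r = |g x| ^ r * w x := fun x => by
    rw [Real.mul_rpow (abs_nonneg _) (Real.rpow_nonneg (hw0 x) _), ← Real.rpow_mul (hw0 x),
      one_div_mul_cancel hrs.ne_zero, Real.rpow_one]
  have hGs : ∀ x, G x ^ s = w x := fun x => by
    rw [← Real.rpow_mul (hw0 x), one_div_mul_cancel hrs.symm.ne_zero, Real.rpow_one]
  have hGm : AEStronglyMeasurable G μ := (hw.aemeasurable.pow_const _).aestronglyMeasurable
  have hFm : AEStronglyMeasurable F μ :=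
    hg.norm.mul (hw.aemeasurable.pow_const _).aestronglyMeasurable
  have := integral_mul_le_Lp_mul_Lq_of_nonneg hrs (.of_forall hF0) (.of_forall hG0)
    (memLp_ofReal_of_integrable_rpow hrs.pos hF0 hFm (by simpa only [hFr] using hgw))
    (memLp_ofReal_of_integrable_rpow hrs.symm.pos hG0 hGm (by simpa only [hGs] using hw))
  simpa only [hFG, hFr, hGs] using this

theorem abs_integral_mul_sub_integral_mul_le {r s : ℝ} (hrs : r.HolderConjugate s)
    {g p q : α → ℝ} (hg : AEStronglyMeasurable g μ) (hp0 : ∀ x, 0 ≤ p x) (hq0 : ∀ x, 0 ≤ q x)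
    (hp : Integrable p μ) (hq : Integrable q μ)
    (hgp : Integrable (fun x => |g x| ^ r * p x) μ)
    (hgq : Integrable (fun x => |g x| ^ r * q x) μ) :
    |(∫ x, g x * q x ∂μ) - ∫ x, g x * p x ∂μ|
      ≤ ((∫ x, |g x| ^ r * p x ∂μ) + ∫ x, |g x| ^ r * q x ∂μ) ^ (1 / r)
        * (∫ x, |q x - p x| ∂μ) ^ (1 / s) := by
  have hdiff_le : ∀ x, |q x - p x| ≤ p x + q x := fun x => by
    rw [abs_le]; constructor <;> linarith [hp0 x, hq0 x]
  have hgpq : Integrable (fun x => |g x| ^ r * |q x - p x|) μ := by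
    refine (hgp.add hgq).mono' (hg.norm.aemeasurable.pow_const r |>.mul
      (hq.sub hp).abs.aemeasurable).aestronglyMeasurable (.of_forall fun x => ?_)
    rw [Pi.add_apply, Real.norm_eq_abs, abs_of_nonneg (by positivity), ← mul_add]
    exact mul_le_mul_of_nonneg_left (hdiff_le x) (by positivity)
  have hweighted : ∫ x, |g x| ^ r * |q x - p x| ∂μ
      ≤ (∫ x, |g x| ^ r * p x ∂μ) + ∫ x, |g x| ^ r * q x ∂μ := by
    rw [← integral_add hgp hgq]
    refine integral_mono hgpq (hgp.add hgq) fun x => ?_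
    rw [← mul_add]
    exact mul_le_mul_of_nonneg_left (hdiff_le x) (by positivity)
  calc |(∫ x, g x * q x ∂μ) - ∫ x, g x * p x ∂μ|
      = |∫ x, g x * (q x - p x) ∂μ| := by
        rw [← integral_sub (hq.mul_of_integrable_rpow_abs_mul hrs.lt.le hg hq0 hgq)
          (hp.mul_of_integrable_rpow_abs_mul hrs.lt.le hg hp0 hgp)]
        simp only [mul_sub]
    _ ≤ ∫ x, |g x| * |q x - p x| ∂μ := by
        simpa only [abs_mul] using abs_integral_le_integral_abs (f := fun x => g x * (q x - p x))
    _ ≤ (∫ x, |g x| ^ r * |q x - p x| ∂μ) ^ (1 / r) * (∫ x, |q x - p x| ∂μ) ^ (1 / s) :=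
        integral_abs_mul_le_of_holderConjugate hrs hg (fun x => abs_nonneg _) (hq.sub hp).abs hgpq
    _ ≤ _ := by gcongr; exact hrs.one_div_nonneg

end MeasureTheory

theorem stmt_4_general {d : ℕ} {Θ : Type*} (f : Θ → (Fin d → ℝ) → ℝ)
    (p q : (Fin d → ℝ) → ℝ) (ε Bp Bq : ℝ) (hε : 0 < ε)
    (hp0 : ∀ z, 0 ≤ p z) (hq0 : ∀ z, 0 ≤ q z)
    (hpi : Integrable p) (hqi : Integrable q)
    (hf : ∀ θ, Measurable (f θ))
    (hint_p : ∀ θ, Integrable (fun z => |Real.log (f θ z)| ^ (1 + ε) * p z))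
    (hint_q : ∀ θ, Integrable (fun z => |Real.log (f θ z)| ^ (1 + ε) * q z))
    (hBp : ∀ θ, ∫ z, |Real.log (f θ z)| ^ (1 + ε) * p z ≤ Bp)
    (hBq : ∀ θ, ∫ z, |Real.log (f θ z)| ^ (1 + ε) * q z ≤ Bq) :
    ∀ θ, |(∫ z, Real.log (f θ z) * q z) - ∫ z, Real.log (f θ z) * p z|
      ≤ (Bp + Bq) ^ (1 / (1 + ε)) * (∫ z, |q z - p z|) ^ (ε / (1 + ε)) := by
  intro θ
  have hconj : (1 + ε).HolderConjugate ((1 + ε) / ε) :=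
    Real.holderConjugate_iff.2 ⟨by linarith, by field_simp⟩
  calc _ ≤ _ := abs_integral_mul_sub_integral_mul_le (g := fun z => Real.log (f θ z)) hconj
        (Real.measurable_log.comp (hf θ)).aestronglyMeasurable hp0 hq0 hpi hqi (hint_p θ) (hint_q θ)
    _ ≤ _ := by
      rw [one_div_div]
      gcongr
      exacts [add_nonneg (integral_nonneg fun z => mul_nonneg (by positivity) (hp0 z))
        (integral_nonneg fun z => mul_nonneg (by positivity) (hq0 z)), hBp θ, hBq θ]

/-- Lemma 1 of the paper: if ∫|log f_θ|^{1+ε} is bounded by B_p under p and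
by B_q under q uniformly in θ, then uniformly in θ,
|∫ log f_θ q − ∫ log f_θ p| ≤ (B_p + B_q)^{1/(1+ε)} (∫|q − p|)^{ε/(1+ε)}. -/
theorem stmt_4 {d : ℕ} {Θ : Type*} (f : Θ → (Fin d → ℝ) → ℝ)
    (hfpos : ∀ θ z, 0 < f θ z)
    (p q : (Fin d → ℝ) → ℝ) (ε Bp Bq : ℝ) (hε : 0 < ε)
    (hp0 : ∀ z, 0 ≤ p z) (hq0 : ∀ z, 0 ≤ q z)
    (hpi : Integrable p) (hqi : Integrable q)
    (hp1 : ∫ z, p z = 1) (hq1 : ∫ z, q z = 1)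
    (hf : ∀ θ, Measurable (f θ))
    (hint_p : ∀ θ, Integrable (fun z => |Real.log (f θ z)| ^ (1 + ε) * p z))
    (hint_q : ∀ θ, Integrable (fun z => |Real.log (f θ z)| ^ (1 + ε) * q z))
    (hint_lp : ∀ θ, Integrable (fun z => Real.log (f θ z) * p z))
    (hint_lq : ∀ θ, Integrable (fun z => Real.log (f θ z) * q z))
    (hBp : ∀ θ, ∫ z, |Real.log (f θ z)| ^ (1 + ε) * p z ≤ Bp)
    (hBq : ∀ θ, ∫ z, |Real.log (f θ z)| ^ (1 + ε) * q z ≤ Bq) :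
    ∀ θ, |(∫ z, Real.log (f θ z) * q z) - ∫ z, Real.log (f θ z) * p z|
      ≤ (Bp + Bq) ^ (1 / (1 + ε)) * (∫ z, |q z - p z|) ^ (ε / (1 + ε)) :=
  stmt_4_general f p q ε Bp Bq hε hp0 hq0 hpi hqi hf hint_p hint_q hBp hBq
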